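/- arXiv:2502.08911 — 3 statements merged into one kernel-verified Lean document; each statement's English description precedes it below -/
import Mathlib

section
/- Let h : ℕ → ℕ be a function taking positive values and let j > 0 be an integer such that for all d ≥ j one has h(d+1) = h(d)^{⟨d⟩}. Then for all d ≥ j, the d-th Macaulay difference set of h(d) equals the j-th Macaulay difference set of h(j); that is, writing the d-binomial expansion of h(d) as Σ_{i=δ_d}^{d} C(k_i^{(d)}, i) and the j-binomial expansion of h(j) as Σ_{i=δ_j}^{j} C(k_i^{(j)}, i), one has d − δ_d = j − δ_j and k^{(d)}_{d−t} − (d−t) = k^{(j)}_{j−t} − (j−t) for all 0 ≤ t ≤ d − δ_d. -/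
/-!
Shifting every index of a `d`-binomial expansion `c = ∑ C(k_i, i)` by one gives the
`(d+1)`-binomial expansion `c^{⟨d⟩} = ∑ C(k_i + 1, i + 1)`, and this shift leaves every
difference `k_i - i` unchanged. Hence, starting from the expansion of `h j`, the ladder
`h (d+1) = h(d)^{⟨d⟩}` produces an expansion of every `h d` with the same differences, and
uniqueness of binomial expansions identifies it with any given one. Uniqueness comes from
`C(k_d, d) ≤ c < C(k_d + 1, d)`, which pins down the top index, followed by induction on `d`.
-/

/-- `IsBinomialExpansion c d δ k` says that `c = ∑_{i=δ}^{d} C(k i, i)` is a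
`d`-binomial expansion of `c`: `0 < δ ≤ d`, the values `k i` are strictly increasing
in `i` on `[δ, d]` (i.e. `k_d > k_{d-1} > ⋯ > k_δ`), and `k δ ≥ δ`. -/
def IsBinomialExpansion (c d δ : ℕ) (k : ℕ → ℕ) : Prop :=
  0 < δ ∧ δ ≤ d ∧ (∀ i, δ ≤ i → i < d → k i < k (i + 1)) ∧ δ ≤ k δ ∧
    c = ∑ i ∈ Finset.Icc δ d, Nat.choose (k i) i

open Finset

namespace IsBinomialExpansion

variable {c d δ : ℕ} {k : ℕ → ℕ}

theorem add_sub_le (h : IsBinomialExpansion c d δ k) {i i' : ℕ} (hi : δ ≤ i) (hii' : i ≤ i')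
    (hi' : i' ≤ d) : k i + (i' - i) ≤ k i' := by
  induction i', hii' using Nat.le_induction with
  | base => simp
  | succ i' hii' ih =>
    have := h.2.2.1 i' (by omega) (by omega)
    have := ih (by omega)
    omega

theorem le_apply (h : IsBinomialExpansion c d δ k) {i : ℕ} (hi : δ ≤ i) (hid : i ≤ d) :
    i ≤ k i := by
  have := h.add_sub_le le_rfl hi hid
  have := h.2.2.2.1
  omega

theorem pos (h : IsBinomialExpansion c d δ k) : 0 < c := by
  obtain ⟨-, hδd, -, hkδ, rfl⟩ := h
  exact lt_of_lt_of_le (Nat.choose_pos hkδ)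
    (single_le_sum (f := fun i => (k i).choose i) (by simp) (mem_Icc.2 ⟨le_rfl, hδd⟩))

theorem choose_top_le (h : IsBinomialExpansion c d δ k) : (k d).choose d ≤ c := by
  obtain ⟨-, hδd, -, -, rfl⟩ := h
  exact single_le_sum (f := fun i => (k i).choose i) (by simp) (mem_Icc.2 ⟨hδd, le_rfl⟩)

theorem lt_choose_top_succ (h : IsBinomialExpansion c d δ k) : c < (k d + 1).choose d := by
  have hkd := h.le_apply h.2.1 le_rfl
  set r := k d - d
  have hterm : ∀ i ∈ Icc δ d, (k i).choose i ≤ (i + r).choose r := by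
    intro i hi
    rw [mem_Icc] at hi
    have := h.add_sub_le hi.1 hi.2 le_rfl
    rw [add_comm i r, Nat.choose_symm_add]
    exact Nat.choose_le_choose i (by omega)
  -- the missing `i = 0` term of the hockey-stick sum makes the inequality strict
  have hsub : Icc δ d ⊆ range (d + 1) := fun i hi => by
    rw [mem_Icc] at hi; rw [mem_range]; omega
  have h0 : 0 ∉ Icc δ d := by have := h.1; simp; omega
  calc c = ∑ i ∈ Icc δ d, (k i).choose i := h.2.2.2.2
    _ ≤ ∑ i ∈ Icc δ d, (i + r).choose r := sum_le_sum hterm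
    _ < ∑ i ∈ range (d + 1), (i + r).choose r :=
      sum_lt_sum_of_subset hsub (mem_range.2 d.succ_pos) h0 (by simp) (by simp)
    _ = (k d + 1).choose d := by
      rw [Nat.sum_range_add_choose, Nat.choose_symm_of_eq_add (b := d) (by omega),
        show d + r = k d by omega]

theorem top_le {δ' : ℕ} {k' : ℕ → ℕ} (h : IsBinomialExpansion c d δ k)
    (h' : IsBinomialExpansion c d δ' k') : k d ≤ k' d := by
  by_contra! hlt
  have := Nat.choose_le_choose d (show k' d + 1 ≤ k d by omega)
  have := h.choose_top_le
  have := h'.lt_choose_top_succ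
  omega

theorem top_eq {δ' : ℕ} {k' : ℕ → ℕ} (h : IsBinomialExpansion c d δ k)
    (h' : IsBinomialExpansion c d δ' k') : k d = k' d :=
  le_antisymm (h.top_le h') (h'.top_le h)

theorem eq_choose_top (h : IsBinomialExpansion c d δ k) (hδ : d ≤ δ) : c = (k d).choose d := by
  rw [h.2.2.2.2, show δ = d from le_antisymm h.2.1 hδ, Icc_self, sum_singleton]

theorem sub_choose_top (h : IsBinomialExpansion c (d + 1) δ k) (hδ : δ ≤ d) :
    IsBinomialExpansion (c - (k (d + 1)).choose (d + 1)) d δ k := by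
  obtain ⟨h0, -, hmono, hkδ, rfl⟩ := h
  refine ⟨h0, hδ, fun i hi hid => hmono i hi (by omega), hkδ, ?_⟩
  rw [sum_Icc_succ_top (by omega), Nat.add_sub_cancel]

theorem choose_top_lt (h : IsBinomialExpansion c (d + 1) δ k) (hδ : δ ≤ d) :
    (k (d + 1)).choose (d + 1) < c := by
  have := (h.sub_choose_top hδ).pos
  omega

theorem unique {δ' : ℕ} {k' : ℕ → ℕ} (h : IsBinomialExpansion c d δ k)
    (h' : IsBinomialExpansion c d δ' k') : δ = δ' ∧ Set.EqOn k k' (Set.Icc δ d) := by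
  induction d generalizing c with
  | zero => have := h.1; have := h.2.1; omega
  | succ d ih =>
    have htop := h.top_eq h'
    rcases Nat.lt_or_ge d δ with hδ | hδ <;> rcases Nat.lt_or_ge d δ' with hδ' | hδ'
    · refine ⟨by have := h.2.1; have := h'.2.1; omega, fun i hi => ?_⟩
      rwa [show i = d + 1 by have := hi.1; have := hi.2; omega]
    · have := h'.choose_top_lt hδ'
      rw [h.eq_choose_top hδ, htop] at this
      omega
    · have := h.choose_top_lt hδ
      rw [h'.eq_choose_top hδ', ← htop] at this
      omega
    · have h'' := h'.sub_choose_top hδ'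
      rw [← htop] at h''
      obtain ⟨rfl, hk⟩ := ih (h.sub_choose_top hδ) h''
      refine ⟨rfl, fun i hi => ?_⟩
      rcases Nat.lt_or_ge i (d + 1) with hid | hid
      · exact hk ⟨hi.1, by omega⟩
      · rwa [show i = d + 1 by have := hi.2; omega]

theorem succ (h : IsBinomialExpansion c d δ k) :
    IsBinomialExpansion (∑ i ∈ Icc δ d, (k i + 1).choose (i + 1)) (d + 1) (δ + 1)
      (fun i => k (i - 1) + 1) := by
  obtain ⟨h0, hδd, hmono, hkδ, -⟩ := h
  refine ⟨by omega, by omega, fun i hi hid => ?_, by simpa using hkδ, ?_⟩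
  · have := hmono (i - 1) (by omega) (by omega)
    rw [show i - 1 + 1 = i by omega] at this
    simpa using this
  · rw [← map_add_right_Icc, sum_map]
    simp

end IsBinomialExpansion

theorem isBinomialExpansion_of_ladder {h : ℕ → ℕ} {j δ : ℕ} {k : ℕ → ℕ}
    (hladder : ∀ d, j ≤ d → ∀ δ k, IsBinomialExpansion (h d) d δ k →
      h (d + 1) = ∑ i ∈ Icc δ d, Nat.choose (k i + 1) (i + 1))
    (hj : IsBinomialExpansion (h j) j δ k) (n : ℕ) :
    IsBinomialExpansion (h (j + n)) (j + n) (δ + n) (fun i => k (i - n) + n) := by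
  induction n with
  | zero => simpa using hj
  | succ n ih =>
    have := ih.succ
    rw [← hladder _ (by omega) _ _ ih] at this
    have hshift : (fun i => k (i - (n + 1)) + (n + 1)) = fun i => k (i - 1 - n) + n + 1 := by
      funext i
      rw [Nat.sub_sub, Nat.add_comm 1 n, Nat.add_assoc]
    rw [hshift]
    exact this

theorem macaulay_difference_set_eventually_constant_general (h : ℕ → ℕ) (j : ℕ)
    (hladder : ∀ d, j ≤ d → ∀ δ k, IsBinomialExpansion (h d) d δ k →
      h (d + 1) = ∑ i ∈ Finset.Icc δ d, Nat.choose (k i + 1) (i + 1)) :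
    ∀ d, j ≤ d → ∀ δd kd δj kj,
      IsBinomialExpansion (h d) d δd kd → IsBinomialExpansion (h j) j δj kj →
        d - δd = j - δj ∧
          ∀ t ≤ d - δd, kd (d - t) - (d - t) = kj (j - t) - (j - t) := by
  intro d hd δd kd δj kj hexp_d hexp_j
  obtain ⟨n, rfl⟩ := Nat.exists_eq_add_of_le hd
  obtain ⟨rfl, hk⟩ := hexp_d.unique (isBinomialExpansion_of_ladder hladder hexp_j n)
  have hδj := hexp_j.2.1
  refine ⟨by omega, fun t ht => ?_⟩
  rw [hk ⟨by omega, by omega⟩]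
  dsimp only
  rw [show j + n - t - n = j - t by omega,
    show j + n - t = j - t + n by omega, Nat.add_sub_add_right]

/-- If `h : ℕ → ℕ` takes positive values and `h (d+1) = (h d)^{⟨d⟩}` for all `d ≥ j`
(where `c^{⟨d⟩} = ∑_{i=δ}^{d} C(k_i + 1, i + 1)` is computed from the `d`-binomial
expansion `c = ∑_{i=δ}^{d} C(k_i, i)`), then for all `d ≥ j` the `d`-th Macaulay
difference set of `h d` equals the `j`-th Macaulay difference set of `h j`:
the two tuples have the same length `d - δ_d = j - δ_j` and the same entries
`k^{(d)}_{d-t} - (d-t) = k^{(j)}_{j-t} - (j-t)` for all `0 ≤ t ≤ d - δ_d`. -/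
theorem macaulay_difference_set_eventually_constant (h : ℕ → ℕ) (j : ℕ)
    (hpos : ∀ d, 0 < h d) (hj : 0 < j)
    (hladder : ∀ d, j ≤ d → ∀ δ k, IsBinomialExpansion (h d) d δ k →
      h (d + 1) = ∑ i ∈ Finset.Icc δ d, Nat.choose (k i + 1) (i + 1)) :
    ∀ d, j ≤ d → ∀ δd kd δj kj,
      IsBinomialExpansion (h d) d δd kd → IsBinomialExpansion (h j) j δj kj →
        d - δd = j - δj ∧
          ∀ t ≤ d - δd, kd (d - t) - (d - t) = kj (j - t) - (j - t) :=
  macaulay_difference_set_eventually_constant_general h j hladder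
end

section
/- Let k be a field and let φ : k[Z00, Z01, Z10, Z11] → k[x, y] be the k-algebra homomorphism determined by Z00 ↦ x², Z01 ↦ x·y, Z10 ↦ x·y, Z11 ↦ y². Then the kernel of φ is exactly the ideal generated by Z01 − Z10 and Z00·Z11 − Z01·Z10. -/
/-!
Modulo `I = (Z01 - Z10, Z00 Z11 - Z01 Z10)` we have `Z10 = Z01` and `Z01² = Z00 Z11`, so every
monomial in the `Z`s is congruent to a multiple of `Z00^a Z01^r Z11^b` with `r ≤ 1`, and this
normal form is recovered from its image `x^(2a+r) y^(2b+r)`. Reading off the normal form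
monomial by monomial gives an additive map `ψ : k[x, y] → k[Z] / I` with `ψ ∘ φ = mk I`,
which forces `ker φ ⊆ I`.
-/

open MvPolynomial

theorem RingHom.ker_eq_of_mk_factors_through {F A B : Type*} [CommRing A] [Semiring B]
    [FunLike F A B] [RingHomClass F A B] (f : F) (I : Ideal A) (hI : I ≤ RingHom.ker f)
    (g : B →+ A ⧸ I) (hg : ∀ a, g (f a) = Ideal.Quotient.mk I a) : RingHom.ker f = I := by
  refine le_antisymm (fun a ha => ?_) hI
  rw [← Ideal.Quotient.eq_zero_iff_mem, ← hg, RingHom.mem_ker.mp ha, map_zero]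

namespace SegreDiagonal

variable (R : Type*) [CommRing R]

noncomputable abbrev segreMap : MvPolynomial (Fin 4) R →ₐ[R] MvPolynomial (Fin 2) R :=
  aeval ![X 0 ^ 2, X 0 * X 1, X 0 * X 1, X 1 ^ 2]

noncomputable abbrev segreIdeal : Ideal (MvPolynomial (Fin 4) R) :=
  Ideal.span {X 1 - X 2, X 0 * X 3 - X 1 * X 2}

variable {R}

local notation "z" i => Ideal.Quotient.mk (segreIdeal R) (X i)

theorem segreIdeal_le_ker : segreIdeal R ≤ RingHom.ker (segreMap R) := by
  rw [Ideal.span_le, Set.insert_subset_iff, Set.singleton_subset_iff]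
  refine ⟨?_, ?_⟩ <;> simp only [SetLike.mem_coe, RingHom.mem_ker, map_sub, map_mul, aeval_X]
  · simp
  · simp only [Matrix.cons_val]
    ring

theorem mk_X_one_eq_mk_X_two : (z 1 : MvPolynomial (Fin 4) R ⧸ segreIdeal R) = z 2 :=
  (Ideal.Quotient.mk_eq_mk_iff_sub_mem _ _).mpr <| Ideal.subset_span (Set.mem_insert _ _)

theorem mk_X_zero_mul_mk_X_three :
    ((z 0) * (z 3) : MvPolynomial (Fin 4) R ⧸ segreIdeal R) = (z 1) ^ 2 := by
  have h : (z 0) * (z 3) = ((z 1) * (z 2) : MvPolynomial (Fin 4) R ⧸ segreIdeal R) := by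
    simp only [← map_mul]
    exact (Ideal.Quotient.mk_eq_mk_iff_sub_mem _ _).mpr <|
      Ideal.subset_span (Set.mem_insert_of_mem _ rfl)
  rw [h, ← mk_X_one_eq_mk_X_two, sq]

theorem mk_monomial (u : Fin 4 →₀ ℕ) (c : R) :
    Ideal.Quotient.mk (segreIdeal R) (monomial u c) =
      c • ((z 0) ^ u 0 * (z 1) ^ (u 1 + u 2) * (z 3) ^ u 3) := by
  rw [show monomial u c = c • monomial u 1 by rw [smul_monomial, smul_eq_mul, mul_one],
    ← Ideal.Quotient.mkₐ_eq_mk R, map_smul, Ideal.Quotient.mkₐ_eq_mk, monomial_eq, C_1, one_mul,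
    Finsupp.prod_fintype _ _ (by simp), Fin.prod_univ_four]
  simp only [map_mul, map_pow, ← mk_X_one_eq_mk_X_two, pow_add, mul_assoc]

theorem segreMap_monomial (u : Fin 4 →₀ ℕ) (c : R) :
    segreMap R (monomial u c) = monomial
      (Finsupp.single 0 (2 * u 0 + (u 1 + u 2)) + Finsupp.single 1 (u 1 + u 2 + 2 * u 3)) c := by
  rw [aeval_monomial, Finsupp.prod_fintype _ _ (by simp), Fin.prod_univ_four, monomial_eq,
    Finsupp.prod_add_index (by simp) (fun _ _ _ _ => pow_add _ _ _)]
  simp [pow_add, pow_mul, mul_pow]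
  ring

/-- On `x ^ a * y ^ b` with `a ≡ b [MOD 2]` this is the normal form
`Z00 ^ (a / 2) * Z01 ^ (a % 2) * Z11 ^ (b / 2)`; on monomials of odd degree, which are not
hit by `segreMap`, its values are arbitrary. -/
noncomputable def segreSection :
    MvPolynomial (Fin 2) R →ₗ[R] MvPolynomial (Fin 4) R ⧸ segreIdeal R :=
  Finsupp.linearCombination R (fun d => (z 0) ^ (d 0 / 2) * (z 1) ^ (d 0 % 2) * (z 3) ^ (d 1 / 2))
    ∘ₗ (AddMonoidAlgebra.coeffLinearEquiv R).toLinearMap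

theorem segreSection_monomial (d : Fin 2 →₀ ℕ) (c : R) :
    segreSection (monomial d c) =
      c • ((z 0) ^ (d 0 / 2) * (z 1) ^ (d 0 % 2) * (z 3) ^ (d 1 / 2)) := by
  rw [← single_eq_monomial]
  exact Finsupp.linearCombination_single R c d

theorem segreSection_segreMap (p : MvPolynomial (Fin 4) R) :
    segreSection (segreMap R p) = Ideal.Quotient.mk (segreIdeal R) p := by
  induction p using MvPolynomial.induction_on' with
  | monomial u c =>
    obtain ⟨q, r, hr, hn⟩ : ∃ q r, r < 2 ∧ u 1 + u 2 = 2 * q + r :=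
      ⟨_, _, Nat.mod_lt _ two_pos, (Nat.div_add_mod _ 2).symm⟩
    rw [segreMap_monomial, segreSection_monomial, mk_monomial, hn]
    simp only [Finsupp.add_apply, Finsupp.single_apply, Fin.isValue, Fin.reduceEq, if_true,
      if_false, add_zero, zero_add]
    rw [show (2 * u 0 + (2 * q + r)) / 2 = u 0 + q by omega,
      show (2 * u 0 + (2 * q + r)) % 2 = r by omega,
      show (2 * q + r + 2 * u 3) / 2 = u 3 + q by omega,
      pow_add _ (2 * q), pow_mul, ← mk_X_zero_mul_mk_X_three]
    congr 1
    ring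
  | add p q hp hq => rw [map_add, map_add, map_add, hp, hq]

end SegreDiagonal

/-- Let `φ : k[Z00, Z01, Z10, Z11] → k[x, y]` be the `k`-algebra homomorphism
determined by `Z00 ↦ x²`, `Z01 ↦ x·y`, `Z10 ↦ x·y`, `Z11 ↦ y²` (with
`Z00 = X 0`, `Z01 = X 1`, `Z10 = X 2`, `Z11 = X 3` and `x = X 0`, `y = X 1`).
Then `ker φ = (Z01 − Z10, Z00·Z11 − Z01·Z10)`. -/
theorem kernel_segre_diagonal (k : Type*) [Field k] :
    RingHom.ker
        (aeval ![(X 0 : MvPolynomial (Fin 2) k) ^ 2, X 0 * X 1, X 0 * X 1, X 1 ^ 2] :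
          MvPolynomial (Fin 4) k →ₐ[k] MvPolynomial (Fin 2) k) =
      Ideal.span {(X 1 - X 2 : MvPolynomial (Fin 4) k), X 0 * X 3 - X 1 * X 2} :=
  RingHom.ker_eq_of_mk_factors_through (SegreDiagonal.segreMap k) (SegreDiagonal.segreIdeal k)
    SegreDiagonal.segreIdeal_le_ker SegreDiagonal.segreSection.toAddMonoidHom
    SegreDiagonal.segreSection_segreMap
end

section
/- Let R be a commutative ring, let n > k > 0 be integers, let e_1, …, e_n be the standard basis of R^n, and let B = {e_{i_1}, …, e_{i_k}} be a k-element subset of the standard basis. Then there is a bijection between the set of R-submodules L ⊆ R^n such that the quotient R^n/L is a free R-module with basis the images [e_{i_1}], …, [e_{i_k}] of the elements of B, and the set of k × (n−k) arrays of elements of R (equivalently, k-algebra homomorphisms k[z_i^j : 1 ≤ i ≤ k, 1 ≤ j ≤ n−k] → R): each such L corresponds to the array of coefficients (α_i^j) such that, listing the basis vectors e_m ∉ B as e_{m_1}, …, e_{m_{n−k}} with m_1 < ⋯ < m_{n−k}, the image [e_{m_j}] in R^n/L equals Σ_{i=1}^{k} α_i^j [e_{i_i}] with respect to the basis {[e_{i_1}],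 …, [e_{i_k}]}. -/
private lemma basis_repr_eq_of_eq {R M ι : Type*} [CommRing R] [AddCommGroup M] [Module R M]
    (b b' : Module.Basis ι R M) (h : ∀ i, b i = b' i) (x : M) : b.repr x = b'.repr x := by
  have heq : (b.repr : M →ₗ[R] ι →₀ R) = (b'.repr : M →ₗ[R] ι →₀ R) := by
    apply b.ext
    intro i
    simp only [LinearEquiv.coe_coe, Module.Basis.repr_self]
    rw [h i, Module.Basis.repr_self]
  simpa using LinearMap.congr_fun heq x

/-- Let `R` be a commutative ring, `n > k > 0`, and let `B : Fin k → Fin n` be a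
strictly monotone enumeration `i_1 < ⋯ < i_k` of a `k`-element subset of the
standard basis of `R^n`, with complement enumerated in increasing order by
`C : Fin (n-k) → Fin n` (so `m_1 < ⋯ < m_{n-k}`).  Then there is a bijection `e`
between the set of submodules `L ⊆ R^n` such that `R^n/L` is free with basis the
images of the `e_{B i}`, and the set of `k × (n−k)` arrays of elements of `R`
(equivalently, `k`-algebra maps `k[z_i^j] → R`): the array `e L` consists of the
coefficients expressing each `[e_{C j}]` in the basis `([e_{B 1}], …, [e_{B k}])`
of `R^n/L`, i.e. `[e_{C j}] = ∑_i (e L) i j • [e_{B i}]`. -/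
theorem grassmann_chart_bijection (R : Type*) [CommRing R] (n k : ℕ)
    (hk : 0 < k) (hkn : k < n)
    (B : Fin k → Fin n) (hB : StrictMono B)
    (C : Fin (n - k) → Fin n) (hC : StrictMono C)
    (hBC : Set.range C = (Set.range B)ᶜ) :
    ∃ e : {L : Submodule R (Fin n → R) //
        ∃ b : Module.Basis (Fin k) R ((Fin n → R) ⧸ L),
          ∀ i, b i = Submodule.Quotient.mk (Pi.single (B i) (1 : R))} ≃
          (Fin k → Fin (n - k) → R),
      ∀ L : {L : Submodule R (Fin n → R) //
        ∃ b : Module.Basis (Fin k) R ((Fin n → R) ⧸ L),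
          ∀ i, b i = Submodule.Quotient.mk (Pi.single (B i) (1 : R))},
        ∀ j : Fin (n - k),
          (Submodule.Quotient.mk (Pi.single (C j) (1 : R)) : (Fin n → R) ⧸ L.1) =
            ∑ i : Fin k, e L i j •
              (Submodule.Quotient.mk (Pi.single (B i) (1 : R)) : (Fin n → R) ⧸ L.1) := by
  classical
  -- The sum of the two index sets enumerates `Fin n`.
  have hinj : Function.Injective (Sum.elim B C) := by
    rintro (a | a) (b | b) hab
    · exact congrArg Sum.inl (hB.injective hab)
    · exfalso
      have : C b ∈ (Set.range B)ᶜ := hBC ▸ Set.mem_range_self b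
      exact this ⟨a, hab⟩
    · exfalso
      have : C a ∈ (Set.range B)ᶜ := hBC ▸ Set.mem_range_self a
      exact this ⟨b, hab.symm⟩
    · exact congrArg Sum.inr (hC.injective hab)
  have hsurj : Function.Surjective (Sum.elim B C) := by
    intro m
    by_cases hm : m ∈ Set.range B
    · obtain ⟨i, hi⟩ := hm; exact ⟨Sum.inl i, hi⟩
    · have : m ∈ Set.range C := by rw [hBC]; exact hm
      obtain ⟨j, hj⟩ := this; exact ⟨Sum.inr j, hj⟩
  let eqv : Fin k ⊕ Fin (n - k) ≃ Fin n := Equiv.ofBijective _ ⟨hinj, hsurj⟩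
  have eqvB : ∀ i, eqv.symm (B i) = Sum.inl i := fun i =>
    eqv.symm_apply_eq.2 rfl
  have eqvC : ∀ j, eqv.symm (C j) = Sum.inr j := fun j =>
    eqv.symm_apply_eq.2 rfl
  -- the linear map `R^n → R^k` associated to a coefficient array
  let t : (Fin k → Fin (n - k) → R) → Fin n → (Fin k → R) := fun α m =>
    Sum.elim (fun i => Pi.single i (1 : R)) (fun j i => α i j) (eqv.symm m)
  let φ : (Fin k → Fin (n - k) → R) → (Fin n → R) →ₗ[R] (Fin k → R) := fun α =>
    (Pi.basisFun R (Fin n)).constr R (t α)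
  have hφ : ∀ α m, φ α (Pi.single m (1 : R)) = t α m := by
    intro α m
    rw [show (Pi.single m (1 : R)) = Pi.basisFun R (Fin n) m from (Pi.basisFun_apply _ _ _).symm]
    exact (Pi.basisFun R (Fin n)).constr_basis R (t α) m
  have hφB : ∀ α i, φ α (Pi.single (B i) (1 : R)) = Pi.single i 1 := by
    intro α i; rw [hφ]; simp only [t, eqvB, Sum.elim_inl]
  have hφC : ∀ α j, φ α (Pi.single (C j) (1 : R)) = fun i => α i j := by
    intro α j; rw [hφ]; simp only [t, eqvC, Sum.elim_inr]
  have hφsurj : ∀ α, Function.Surjective (φ α) := by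
    intro α
    rw [← LinearMap.range_eq_top, ← top_le_iff, ← (Pi.basisFun R (Fin k)).span_eq,
      Submodule.span_le]
    rintro _ ⟨i, rfl⟩
    exact ⟨Pi.single (B i) 1, by rw [hφB]; simp⟩
  -- the inverse map
  let q : ∀ α, ((Fin n → R) ⧸ LinearMap.ker (φ α)) ≃ₗ[R] (Fin k → R) := fun α =>
    (φ α).quotKerEquivOfSurjective (hφsurj α)
  have hq : ∀ α x, q α (Submodule.Quotient.mk x) = φ α x := fun α x => rfl
  let bas : ∀ α, Module.Basis (Fin k) R ((Fin n → R) ⧸ LinearMap.ker (φ α)) := fun α =>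
    (Pi.basisFun R (Fin k)).map (q α).symm
  have hbas : ∀ α i, bas α i =
      (Submodule.Quotient.mk (Pi.single (B i) (1 : R)) :
        (Fin n → R) ⧸ LinearMap.ker (φ α)) := by
    intro α i
    apply (q α).injective
    rw [hq]
    simp only [bas, Module.Basis.map_apply, LinearEquiv.apply_symm_apply, Pi.basisFun_apply]
    rw [hφB]
  have hbasrepr : ∀ α x i, (bas α).repr x i = q α x i := by
    intro α x i
    simp [bas, Module.Basis.map_repr]
  -- forward map: coefficients w.r.t. the (unique) basis
  refine ⟨Equiv.mk
    (fun L => fun i j => (L.2.choose).repr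
      (Submodule.Quotient.mk (Pi.single (C j) (1 : R))) i)
    (fun α => ⟨LinearMap.ker (φ α), bas α, hbas α⟩)
    ?_ ?_, ?_⟩
  · -- left inverse
    rintro ⟨L, hL⟩
    obtain ⟨b, hb⟩ := id hL
    set α : Fin k → Fin (n - k) → R := fun i j =>
      (hL.choose).repr (Submodule.Quotient.mk (Pi.single (C j) (1 : R))) i with hα
    have hαb : ∀ i j, α i j = b.repr (Submodule.Quotient.mk (Pi.single (C j) (1 : R))) i := by
      intro i j
      exact DFunLike.congr_fun
        (basis_repr_eq_of_eq hL.choose b (fun i => by rw [hL.choose_spec i, hb i])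
          (Submodule.Quotient.mk (Pi.single (C j) (1 : R)))) i
    -- show `ker (φ α) = L`
    have key : LinearMap.ker (φ α) = L := by
      have hψ : φ α = (Finsupp.linearEquivFunOnFinite R R (Fin k)).toLinearMap ∘ₗ
          (b.repr : ((Fin n → R) ⧸ L) →ₗ[R] (Fin k →₀ R)) ∘ₗ L.mkQ := by
        apply (Pi.basisFun R (Fin n)).ext
        intro m
        rcases hsurj m with ⟨a | a, rfl⟩
        · rw [Sum.elim_inl]
          simp only [Pi.basisFun_apply, LinearMap.comp_apply, Submodule.mkQ_apply]
          rw [hφB, ← hb a]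
          ext i
          simp [Module.Basis.repr_self, Finsupp.single_apply, Pi.single_apply, eq_comm,
            Finsupp.linearEquivFunOnFinite]
          show _ = (Finsupp.single a (1 : R)) i
          rw [Finsupp.single_apply]
        · rw [Sum.elim_inr]
          simp only [Pi.basisFun_apply, LinearMap.comp_apply, Submodule.mkQ_apply]
          rw [hφC]
          ext i
          rw [hαb i a]
          rfl
      rw [hψ, LinearMap.ker_comp,
        LinearMap.ker_eq_bot.2 (Finsupp.linearEquivFunOnFinite R R (Fin k)).injective,
        Submodule.comap_bot, LinearMap.ker_comp,
        LinearMap.ker_eq_bot.2 b.repr.injective, Submodule.comap_bot, Submodule.ker_mkQ]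
    exact Subtype.ext key
  · -- right inverse
    intro α
    funext i j
    set L' : {L : Submodule R (Fin n → R) //
        ∃ b : Module.Basis (Fin k) R ((Fin n → R) ⧸ L),
          ∀ i, b i = Submodule.Quotient.mk (Pi.single (B i) (1 : R))} :=
      ⟨LinearMap.ker (φ α), bas α, hbas α⟩ with hL'
    show (L'.2.choose).repr (Submodule.Quotient.mk (Pi.single (C j) (1 : R))) i = α i j
    rw [basis_repr_eq_of_eq L'.2.choose (bas α)
      (fun i => by rw [L'.2.choose_spec i, hbas α i])]
    rw [hbasrepr, hq, hφC]
  · -- the defining equation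
    rintro ⟨L, hL⟩ j
    obtain ⟨b, hb⟩ := id hL
    simp only [Equiv.coe_fn_mk]
    have := (hL.choose).sum_repr (Submodule.Quotient.mk (Pi.single (C j) (1 : R)))
    conv_lhs => rw [← this]
    refine Finset.sum_congr rfl fun i _ => ?_
    rw [hL.choose_spec i]
end
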